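/- Let L be a self-similar abelian group, i.e., there exists a finite-index subgroup M ≤ L and a homomorphism φ : M → L with no nontrivial φ-invariant subgroup of M. Let L^ω = ⊕_{i≥1} L be a countable direct sum of copies of L. Then the wreath product L^ω wr C_2 is self-similar: it admits a finite-index subgroup H and a homomorphism f : H → L^ω wr C_2 such that no nontrivial subgroup of H normal in L^ω wr C_2 is f-invariant. -/

import Mathlib

def shiftEquiv {B X : Type*} [AddCommGroup B] [AddCommGroup X] (x : X) :
    (X →₀ B) ≃+ (X →₀ B) := Finsupp.domCongr (Equiv.addRight x)

noncomputable def shiftHom (B X : Type*) [AddCommGroup B] [AddCommGroup X] :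
    Multiplicative X →* Multiplicative (AddAut (X →₀ B)) :=
  MonoidHom.mk' (fun x => Multiplicative.ofAdd (shiftEquiv x.toAdd)) (by
    intro a b
    show shiftEquiv _ = shiftEquiv _ + shiftEquiv _
    apply AddEquiv.ext
    intro f
    ext y
    simp [shiftEquiv, Finsupp.domCongr, Equiv.Perm.mul_def, sub_eq_add_neg]
    congr 1
    abel)

noncomputable def wreathAct (B X : Type*) [AddCommGroup B] [AddCommGroup X] :
    Multiplicative X →* MulAut (Multiplicative (X →₀ B)) :=
  { toFun := fun x => AddEquiv.toMultiplicative (Multiplicative.toAdd (shiftHom B X x))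
    map_one' := by ext f; simp
    map_mul' := by intro a b; ext f; simp }

abbrev Wreath (B X : Type*) [AddCommGroup B] [AddCommGroup X] :=
  SemidirectProduct (Multiplicative (X →₀ B)) (Multiplicative X) (wreathAct B X)

/-!
Let `K` be a normal subgroup of `L^ω wr C₂` contained in `H` and invariant under `f`, and let
`V ≤ L^ω` consist of the first coordinates of the elements of `K`. Conjugating by the generator
of `C₂`, applying `f` and conjugating back shows that `V` is invariant under `φ'_1` and under
the swap of the first two coordinates. For `β ∈ V` supported on `{0, 1}` these maps give
`(φ β₀ + β₁, 0)` and `(β₁, β₀)` in `V`, so the values `β₀` form a `φ`-invariant subgroup of `M`,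
which is trivial; hence such `β` vanish. Since `φ'_1` shortens supports, induction on the support
gives `V = 0`, and the second coordinates of `K` vanish because they are first coordinates of a
conjugate.
-/

open SemidirectProduct Multiplicative

noncomputable section

variable {L : Type*} [AddCommGroup L]

def IsCoreFree {M : AddSubgroup L} (φ : M →+ L) : Prop :=
  ∀ U : AddSubgroup L, ∀ hU : U ≤ M, (∀ u (hu : u ∈ U), φ ⟨u, hU hu⟩ ∈ U) → U = ⊥

def headSubgroup (M : AddSubgroup L) : AddSubgroup (ℕ →₀ L) :=
  M.comap (Finsupp.applyAddHom 0)

def headSubgroup.head (M : AddSubgroup L) : headSubgroup M →+ M :=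
  (Finsupp.applyAddHom 0).addSubgroupComap M

/-- The paper's `φ'_1 : (β₀, β₁, β₂, …) ↦ (φ β₀ + β₁, β₂, …)`; `swapHead` is its `φ'_2`. -/
def contractHead {M : AddSubgroup L} (φ : M →+ L) : headSubgroup M →+ (ℕ →₀ L) :=
  AddMonoidHom.mk'
    (fun β => Finsupp.comapDomain.addMonoidHom Nat.succ_injective β.1 +
      Finsupp.single 0 (φ (headSubgroup.head M β)))
    (fun β γ => by simp only [AddSubgroup.coe_add, map_add, Finsupp.single_add]; abel)

def swapHead : (ℕ →₀ L) ≃+ (ℕ →₀ L) :=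
  Finsupp.domCongr (Equiv.swap 0 1)

section

variable {M : AddSubgroup L} (φ : M →+ L)

lemma contractHead_apply_zero (β : headSubgroup M) :
    contractHead φ β 0 = β.1 1 + φ ⟨β.1 0, β.2⟩ := by
  simp only [contractHead, AddMonoidHom.mk'_apply, Finsupp.coe_add, Pi.add_apply,
    Finsupp.comapDomain.addMonoidHom_apply, Finsupp.comapDomain_apply, Finsupp.single_eq_same]
  rfl

lemma contractHead_apply_of_ne_zero (β : headSubgroup M) {i : ℕ} (hi : i ≠ 0) :
    contractHead φ β i = β.1 (i + 1) := by
  simp [contractHead, Ne.symm hi]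

lemma swapHead_apply_zero (β : ℕ →₀ L) : swapHead β 0 = β 1 := by
  simp [swapHead, Finsupp.domCongr]

lemma swapHead_apply_of_two_le (β : ℕ →₀ L) {i : ℕ} (hi : 2 ≤ i) : swapHead β i = β i := by
  simp [swapHead, Finsupp.domCongr,
    Equiv.swap_apply_of_ne_of_ne (by omega : i ≠ 0) (by omega : i ≠ 1)]

end

def supportedBelow (L : Type*) [AddCommGroup L] (n : ℕ) : AddSubgroup (ℕ →₀ L) :=
  (Finsupp.supported L ℤ (Set.Iio n)).toAddSubgroup

lemma mem_supportedBelow {n : ℕ} {β : ℕ →₀ L} :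
    β ∈ supportedBelow L n ↔ ∀ i, n ≤ i → β i = 0 := by
  simp [supportedBelow, Finsupp.mem_supported']

lemma supportedBelow_mono {m n : ℕ} (h : m ≤ n) : supportedBelow L m ≤ supportedBelow L n :=
  Finsupp.supported_mono (R := ℤ) (Set.Iio_subset_Iio h)

lemma exists_mem_supportedBelow (β : ℕ →₀ L) : ∃ n, β ∈ supportedBelow L n := by
  refine ⟨β.support.sup id + 1, mem_supportedBelow.2 fun i hi =>
    Finsupp.notMem_support_iff.1 fun h => ?_⟩
  have := Finset.le_sup (f := id) h
  simp only [id] at this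
  omega

lemma contractHead_mem_supportedBelow {M : AddSubgroup L} (φ : M →+ L) {n : ℕ}
    {β : headSubgroup M} (hβ : β.1 ∈ supportedBelow L (n + 2)) :
    contractHead φ β ∈ supportedBelow L (n + 1) := by
  rw [mem_supportedBelow] at hβ ⊢
  intro i hi
  rw [contractHead_apply_of_ne_zero φ β (by omega), hβ _ (by omega)]

lemma mem_supportedBelow_two_of_contractHead_eq_zero {M : AddSubgroup L} {φ : M →+ L}
    {β : headSubgroup M} (hβ : contractHead φ β = 0) : β.1 ∈ supportedBelow L 2 := by
  rw [mem_supportedBelow]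
  intro i hi
  obtain ⟨j, rfl⟩ := Nat.exists_eq_add_of_le' hi
  rw [← contractHead_apply_of_ne_zero φ β (by omega : j + 1 ≠ 0), hβ, Finsupp.coe_zero,
    Pi.zero_apply]

structure IsSwapContractInvariant {M : AddSubgroup L} (φ : M →+ L) (V : AddSubgroup (ℕ →₀ L)) :
    Prop where
  le_headSubgroup : V ≤ headSubgroup M
  swapHead_mem : ∀ β ∈ V, swapHead β ∈ V
  contractHead_mem : ∀ β (hβ : β ∈ V), contractHead φ ⟨β, le_headSubgroup hβ⟩ ∈ V

namespace IsSwapContractInvariant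

variable {M : AddSubgroup L} {φ : M →+ L} {V : AddSubgroup (ℕ →₀ L)}

lemma eq_zero_of_mem_supportedBelow_two (hφ : IsCoreFree φ) (hV : IsSwapContractInvariant φ V)
    {β : ℕ →₀ L} (hβ : β ∈ V) (h2 : β ∈ supportedBelow L 2) : β = 0 := by
  have hswap : ∀ γ ∈ V ⊓ supportedBelow L 2, swapHead γ ∈ V ⊓ supportedBelow L 2 := by
    rintro γ ⟨hγV, hγ2⟩
    refine ⟨hV.swapHead_mem γ hγV, mem_supportedBelow.2 fun i hi => ?_⟩
    rw [swapHead_apply_of_two_le γ hi, mem_supportedBelow.1 hγ2 i hi]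
  let U : AddSubgroup L := (V ⊓ supportedBelow L 2).map (Finsupp.applyAddHom 0)
  have hUM : U ≤ M := by
    rintro _ ⟨γ, hγ, rfl⟩
    exact hV.le_headSubgroup hγ.1
  have hU : ∀ u (hu : u ∈ U), φ ⟨u, hUM hu⟩ ∈ U := by
    rintro _ ⟨γ, ⟨hγV, hγ2⟩, rfl⟩
    have hc : γ 1 + φ ⟨γ 0, hV.le_headSubgroup hγV⟩ ∈ U :=
      ⟨_, ⟨hV.contractHead_mem γ hγV,
        supportedBelow_mono (by norm_num : 0 + 1 ≤ 2) (contractHead_mem_supportedBelow φ hγ2)⟩,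
        contractHead_apply_zero φ _⟩
    have hs : γ 1 ∈ U := ⟨_, hswap γ ⟨hγV, hγ2⟩, swapHead_apply_zero γ⟩
    simpa using U.sub_mem hc hs
  have hU0 : ∀ γ ∈ V ⊓ supportedBelow L 2, γ 0 = 0 := fun γ hγ =>
    (AddSubgroup.eq_bot_iff_forall U).1 (hφ U hUM hU) _ ⟨γ, hγ, rfl⟩
  ext i
  rcases i with _ | _ | i
  · exact hU0 β ⟨hβ, h2⟩
  · simpa [swapHead_apply_zero] using hU0 _ (hswap β ⟨hβ, h2⟩)
  · exact mem_supportedBelow.1 h2 _ (by omega)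

lemma eq_bot (hφ : IsCoreFree φ) (hV : IsSwapContractInvariant φ V) : V = ⊥ := by
  have key : ∀ n, ∀ β ∈ V, β ∈ supportedBelow L (n + 2) → β = 0 := by
    intro n
    induction n with
    | zero => exact fun β hβ => hV.eq_zero_of_mem_supportedBelow_two hφ hβ
    | succ n ih =>
      intro β hβ hn
      have hc := ih _ (hV.contractHead_mem β hβ) (contractHead_mem_supportedBelow φ hn)
      exact hV.eq_zero_of_mem_supportedBelow_two hφ hβ
        (mem_supportedBelow_two_of_contractHead_eq_zero hc)
  refine (AddSubgroup.eq_bot_iff_forall V).2 fun β hβ => ?_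
  obtain ⟨n, hn⟩ := exists_mem_supportedBelow β
  exact key n β hβ (supportedBelow_mono (by omega : n ≤ n + 2) hn)

end IsSwapContractInvariant

def baseSubgroup (M : AddSubgroup L) : AddSubgroup (ZMod 2 →₀ ℕ →₀ L) :=
  (headSubgroup M).comap (Finsupp.applyAddHom 0)

def baseSubgroup.head (M : AddSubgroup L) : baseSubgroup M →+ headSubgroup M :=
  (Finsupp.applyAddHom (0 : ZMod 2)).addSubgroupComap (headSubgroup M)

/-- The paper's `f` on the base: `(β₁, β₂) ↦ (φ'_1 β₁, φ'_2 β₂)`, where `(β₁, β₂) = (w 0, w 1)`. -/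
def baseMap {M : AddSubgroup L} (φ : M →+ L) : baseSubgroup M →+ (ZMod 2 →₀ ℕ →₀ L) :=
  AddMonoidHom.mk'
    (fun w => Finsupp.single 0 (contractHead φ (baseSubgroup.head M w)) +
      Finsupp.single 1 (swapHead (w.1 1)))
    (fun v w => by
      simp only [AddSubgroup.coe_add, map_add, Finsupp.single_add, Finsupp.add_apply]
      abel)

section

variable {M : AddSubgroup L} {φ : M →+ L}

lemma baseMap_apply_zero (w : baseSubgroup M) :
    baseMap φ w 0 = contractHead φ ⟨w.1 0, w.2⟩ := by
  simp only [baseMap, AddMonoidHom.mk'_apply, Finsupp.coe_add, Pi.add_apply,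
    Finsupp.single_eq_same, Finsupp.single_eq_of_ne zero_ne_one, add_zero]
  rfl

lemma baseMap_apply_one (w : baseSubgroup M) : baseMap φ w 1 = swapHead (w.1 1) := by
  simp [baseMap]

lemma shiftEquiv_apply {B X : Type*} [AddCommGroup B] [AddCommGroup X] (x : X) (w : X →₀ B)
    (y : X) : shiftEquiv x w y = w (y - x) := by
  simp [shiftEquiv, Finsupp.domCongr, sub_eq_add_neg]

lemma shiftEquiv_one_apply_zero (w : ZMod 2 →₀ ℕ →₀ L) : shiftEquiv 1 w 0 = w 1 := by
  rw [shiftEquiv_apply]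
  rfl

lemma shiftEquiv_one_apply_one (w : ZMod 2 →₀ ℕ →₀ L) : shiftEquiv 1 w 1 = w 0 := by
  rw [shiftEquiv_apply, sub_self]

lemma eq_bot_of_le_baseSubgroup (hφ : IsCoreFree φ) {B : AddSubgroup (ZMod 2 →₀ ℕ →₀ L)}
    (hBM : B ≤ baseSubgroup M) (hshift : ∀ w ∈ B, shiftEquiv 1 w ∈ B)
    (hmap : ∀ w (hw : w ∈ B), baseMap φ ⟨w, hBM hw⟩ ∈ B) : B = ⊥ := by
  have hV : IsSwapContractInvariant φ (B.map (Finsupp.applyAddHom 0)) :=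
    { le_headSubgroup := by
        rintro _ ⟨w, hw, rfl⟩
        exact hBM hw
      swapHead_mem := by
        rintro _ ⟨w, hw, rfl⟩
        refine ⟨_, hshift _ (hmap _ (hshift w hw)), ?_⟩
        simp only [Finsupp.applyAddHom_apply, shiftEquiv_one_apply_zero, baseMap_apply_one,
          shiftEquiv_one_apply_one]
      contractHead_mem := by
        rintro _ ⟨w, hw, rfl⟩
        exact ⟨_, hmap w hw, baseMap_apply_zero _⟩ }
  have hV0 : ∀ w ∈ B, w 0 = 0 := fun w hw =>
    (AddSubgroup.eq_bot_iff_forall _).1 (hV.eq_bot hφ) _ ⟨w, hw, rfl⟩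
  refine (AddSubgroup.eq_bot_iff_forall B).2 fun w hw => ?_
  ext y : 1
  obtain rfl | rfl : y = 0 ∨ y = 1 := by revert y; decide
  · exact hV0 w hw
  · rw [← shiftEquiv_one_apply_zero]
    exact hV0 _ (hshift w hw)

end

lemma inr_mul_inl_mul_inr_inv {B X : Type*} [AddCommGroup B] [AddCommGroup X] (x : X)
    (w : X →₀ B) :
    (inr (ofAdd x) * inl (ofAdd w) * (inr (ofAdd x))⁻¹ : Wreath B X) =
      inl (ofAdd (shiftEquiv x w)) := by
  rw [← map_inv, ← inl_aut]
  rfl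

def wreathSubgroup (M : AddSubgroup L) : Subgroup (Wreath (ℕ →₀ L) (ZMod 2)) :=
  (AddSubgroup.toSubgroup (baseSubgroup M)).map inl

def wreathSubgroupEquiv (M : AddSubgroup L) :
    AddSubgroup.toSubgroup (baseSubgroup M) ≃* wreathSubgroup M :=
  Subgroup.equivMapOfInjective _ _ inl_injective

def wreathMap {M : AddSubgroup L} (φ : M →+ L) :
    wreathSubgroup M →* Wreath (ℕ →₀ L) (ZMod 2) :=
  inl.comp <| (AddMonoidHom.toMultiplicative (baseMap φ)).comp
    (wreathSubgroupEquiv M).symm.toMonoidHom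

section

variable {M : AddSubgroup L} {φ : M →+ L}

lemma wreathMap_inl (w : ZMod 2 →₀ ℕ →₀ L) (hw : w ∈ baseSubgroup M) :
    wreathMap φ ⟨inl (ofAdd w), Subgroup.mem_map_of_mem _ hw⟩ =
      inl (ofAdd (baseMap φ ⟨w, hw⟩)) := by
  have h : (wreathSubgroupEquiv M).symm ⟨inl (ofAdd w), Subgroup.mem_map_of_mem _ hw⟩ =
      ⟨ofAdd w, hw⟩ :=
    (MulEquiv.symm_apply_eq _).2 rfl
  show inl (AddMonoidHom.toMultiplicative (baseMap φ) ((wreathSubgroupEquiv M).symm _)) = _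
  rw [h]
  rfl

lemma index_wreathSubgroup (M : AddSubgroup L) : (wreathSubgroup M).index = M.index * 2 := by
  rw [wreathSubgroup, Subgroup.index_map_of_injective _ inl_injective,
    AddSubgroup.index_toSubgroup, baseSubgroup,
    AddSubgroup.index_comap_of_surjective _ (Finsupp.apply_surjective 0), headSubgroup,
    AddSubgroup.index_comap_of_surjective _ (Finsupp.apply_surjective 0),
    range_inl_eq_ker_rightHom, Subgroup.index_ker,
    MonoidHom.range_eq_top_of_surjective _ rightHom_surjective, Subgroup.card_top]
  simp

lemma eq_bot_of_le_wreathSubgroup (hφ : IsCoreFree φ) {K : Subgroup (Wreath (ℕ →₀ L) (ZMod 2))}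
    (hN : K.Normal) (hK : K ≤ wreathSubgroup M)
    (hf : ∀ k (hk : k ∈ K), wreathMap φ ⟨k, hK hk⟩ ∈ K) : K = ⊥ := by
  let B := Subgroup.toAddSubgroup' (K.comap inl)
  have hBM : B ≤ baseSubgroup M := fun w hw =>
    (Subgroup.mem_map_iff_mem inl_injective).1 (hK hw)
  have hB : B = ⊥ := by
    refine eq_bot_of_le_baseSubgroup hφ hBM (fun w hw => ?_) (fun w hw => ?_)
    · simp only [B, Subgroup.mem_toAddSubgroup', Subgroup.mem_comap] at hw ⊢
      rw [← inr_mul_inl_mul_inr_inv]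
      exact hN.conj_mem _ hw _
    · simp only [B, Subgroup.mem_toAddSubgroup', Subgroup.mem_comap] at hw ⊢
      rw [← wreathMap_inl]
      exact hf _ hw
  refine (Subgroup.eq_bot_iff_forall K).2 fun k hk => ?_
  obtain ⟨x, -, rfl⟩ := hK hk
  have hx : toAdd x ∈ B := hk
  rw [hB, AddSubgroup.mem_bot] at hx
  rw [← ofAdd_toAdd x, hx, ofAdd_zero, map_one]

end

end

/-- Theorem 2: If `L` is a self-similar abelian group (it admits a
finite-index subgroup `M` and a homomorphism `φ : M → L` with no nontrivial
`φ`-invariant subgroup of `M`), then the wreath product `L^ω wr C₂`, where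
`L^ω = ⊕_{i≥1} L`, is self-similar: it admits a finite-index subgroup `H` and a
homomorphism `f : H → L^ω wr C₂` such that no nontrivial subgroup of `H` normal in
`L^ω wr C₂` is `f`-invariant. -/
theorem stmt19 {L : Type*} [AddCommGroup L]
    (hss : ∃ M : AddSubgroup L, M.FiniteIndex ∧ ∃ φ : M →+ L,
      ∀ U : AddSubgroup L, ∀ hU : U ≤ M,
        (∀ u (hu : u ∈ U), φ ⟨u, hU hu⟩ ∈ U) → U = ⊥) :
    ∃ H : Subgroup (Wreath (ℕ →₀ L) (ZMod 2)), H.FiniteIndex ∧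
      ∃ f : H →* Wreath (ℕ →₀ L) (ZMod 2),
        ∀ K : Subgroup (Wreath (ℕ →₀ L) (ZMod 2)), K.Normal → ∀ hK : K ≤ H,
          (∀ k (hk : k ∈ K), f ⟨k, hK hk⟩ ∈ K) → K = ⊥ := by
  obtain ⟨M, hM, φ, hφ⟩ := hss
  have hH : (wreathSubgroup M).FiniteIndex :=
    ⟨by rw [index_wreathSubgroup]; exact mul_ne_zero hM.index_ne_zero two_ne_zero⟩
  exact ⟨wreathSubgroup M, hH, wreathMap φ, fun K hN hK hf =>
    eq_bot_of_le_wreathSubgroup hφ hN hK hf⟩
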